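/- Let (M,d) be a nonempty compact geodesic metric space, let v > 0, and let (x_i)_{i∈ℕ} be a sequence of points of M. Then there exists a map x : [0,∞) → M, Lipschitz with constant at most v (i.e. d(x(s),x(t)) ≤ v·|s−t| for all s,t ≥ 0), which satisfies property (B) for every point x_i. -/
import Mathlib


open MeasureTheory Filter

/-- A map `x : [0,∞) → M` satisfies property (B) for a point `z` if for every `K ∈ (0,1)` and
every `T > 0` there are `T'' > T' > T` with `(T'' − T')/T'' > K` and `x ≡ z` on `[T', T'']`. -/
def PropertyB {M : Type*} [MetricSpace M] (x : ℝ → M) (z : M) : Prop :=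
  ∀ K ∈ Set.Ioo (0 : ℝ) 1, ∀ T > (0 : ℝ), ∃ T' T'' : ℝ, T < T' ∧ T' < T'' ∧
    K < (T'' - T') / T'' ∧ ∀ t ∈ Set.Icc T' T'', x t = z

/-- A metric space is geodesic if any two points are joined by an isometric path. -/
def IsGeodesicSpace (M : Type*) [MetricSpace M] : Prop :=
  ∀ p q : M, ∃ γ : ℝ → M, γ 0 = p ∧ γ (dist p q) = q ∧
    ∀ s ∈ Set.Icc (0 : ℝ) (dist p q), ∀ t ∈ Set.Icc (0 : ℝ) (dist p q),
      dist (γ s) (γ t) = |s - t|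

section Aux

variable {M : Type*} [MetricSpace M]

/-- A chosen geodesic from `p` to `q`. -/
noncomputable def geod (hM : IsGeodesicSpace M) (p q : M) : ℝ → M := (hM p q).choose

lemma geod_zero (hM : IsGeodesicSpace M) (p q : M) : geod hM p q 0 = p :=
  (hM p q).choose_spec.1

lemma geod_dist (hM : IsGeodesicSpace M) (p q : M) : geod hM p q (dist p q) = q :=
  (hM p q).choose_spec.2.1

lemma geod_iso (hM : IsGeodesicSpace M) (p q : M) {s t : ℝ}
    (hs : s ∈ Set.Icc (0 : ℝ) (dist p q)) (ht : t ∈ Set.Icc (0 : ℝ) (dist p q)) :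
    dist (geod hM p q s) (geod hM p q t) = |s - t| :=
  (hM p q).choose_spec.2.2 s hs t ht

/-- The `k`-th point to visit. -/
noncomputable def stagePt (xi : ℕ → M) (k : ℕ) : M := xi (Nat.unpair k).1

/-- Start time of the `k`-th stay. -/
noncomputable def stageA (xi : ℕ → M) (v : ℝ) : ℕ → ℝ
  | 0 => 0
  | k + 1 => (((k : ℝ) + 2) * stageA xi v k + 1)
      + dist (stagePt xi k) (stagePt xi (k + 1)) / v

/-- End time of the `k`-th stay. -/
noncomputable def stageB (xi : ℕ → M) (v : ℝ) (k : ℕ) : ℝ :=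
  ((k : ℝ) + 2) * stageA xi v k + 1

variable (hM : IsGeodesicSpace M) (xi : ℕ → M) (v : ℝ)

/-- On `[a k, a (k+1)]`: stay at `stagePt k` until `b k`, then move along the geodesic. -/
noncomputable def pathPiece (k : ℕ) (t : ℝ) : M :=
  if t ≤ stageB xi v k then stagePt xi k
  else geod hM (stagePt xi k) (stagePt xi (k + 1)) (v * (t - stageB xi v k))

/-- Index of the stage containing time `t`. -/
noncomputable def stageIdx (t : ℝ) : ℕ := sInf {k | t < stageA xi v (k + 1)}

/-- The path. -/
noncomputable def thePath (t : ℝ) : M := pathPiece hM xi v (stageIdx xi v t) t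

variable {v} (hv : 0 < v)
include hv

lemma le_stageA (k : ℕ) : (k : ℝ) ≤ stageA xi v k := by
  induction k with
  | zero => simp [stageA]
  | succ k ih =>
    have h0 : (0 : ℝ) ≤ stageA xi v k := le_trans (by positivity) ih
    have hd : (0 : ℝ) ≤ dist (stagePt xi k) (stagePt xi (k + 1)) / v :=
      div_nonneg dist_nonneg hv.le
    have : ((k : ℝ)) + 1 ≤ ((k : ℝ) + 2) * stageA xi v k + 1 + 0 := by
      nlinarith
    simpa [stageA] using le_trans this (by linarith)

lemma stageA_nonneg (k : ℕ) : (0 : ℝ) ≤ stageA xi v k :=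
  le_trans (by positivity) (le_stageA xi hv k)

lemma stageA_lt_stageB (k : ℕ) : stageA xi v k < stageB xi v k := by
  have h0 := stageA_nonneg xi hv k
  have : stageA xi v k ≤ ((k : ℝ) + 2) * stageA xi v k := by nlinarith
  unfold stageB; linarith

lemma stageB_le_stageA_succ (k : ℕ) : stageB xi v k ≤ stageA xi v (k + 1) := by
  have hd : (0 : ℝ) ≤ dist (stagePt xi k) (stagePt xi (k + 1)) / v :=
    div_nonneg dist_nonneg hv.le
  show stageB xi v k ≤ _
  unfold stageA stageB
  linarith

lemma stageA_lt_succ (k : ℕ) : stageA xi v k < stageA xi v (k + 1) :=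
  lt_of_lt_of_le (stageA_lt_stageB xi hv k) (stageB_le_stageA_succ xi hv k)

lemma stageA_mono : StrictMono (stageA xi v) :=
  strictMono_nat_of_lt_succ (stageA_lt_succ xi hv)

lemma stageIdx_eq {k : ℕ} {t : ℝ} (h1 : stageA xi v k ≤ t) (h2 : t < stageA xi v (k + 1)) :
    stageIdx xi v t = k := by
  have hk : k ∈ {k | t < stageA xi v (k + 1)} := h2
  refine le_antisymm (Nat.sInf_le hk) ?_
  by_contra h
  push_neg at h
  have hmem : stageIdx xi v t ∈ {k | t < stageA xi v (k + 1)} := Nat.sInf_mem ⟨k, hk⟩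
  have : stageA xi v (stageIdx xi v t + 1) ≤ stageA xi v k :=
    (stageA_mono xi hv).monotone (by omega)
  exact absurd (lt_of_lt_of_le hmem this) (not_lt.2 h1)

lemma pathPiece_endpoint (k : ℕ) :
    pathPiece hM xi v k (stageA xi v (k + 1)) = stagePt xi (k + 1) := by
  unfold pathPiece
  rcases le_or_gt (stageA xi v (k + 1)) (stageB xi v k) with h | h
  · rw [if_pos h]
    have hd : dist (stagePt xi k) (stagePt xi (k + 1)) / v ≤ 0 := by
      have : stageA xi v (k + 1) = stageB xi v k
          + dist (stagePt xi k) (stagePt xi (k + 1)) / v := rfl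
      linarith
    have hd0 : dist (stagePt xi k) (stagePt xi (k + 1)) = 0 := by
      have := div_nonneg (dist_nonneg : (0:ℝ) ≤ dist (stagePt xi k) (stagePt xi (k+1))) hv.le
      have h1 : dist (stagePt xi k) (stagePt xi (k + 1)) / v = 0 := le_antisymm hd this
      exact (div_eq_zero_iff.mp h1).resolve_right hv.ne'
    exact eq_of_dist_eq_zero hd0
  · rw [if_neg (not_le.2 h)]
    have : v * (stageA xi v (k + 1) - stageB xi v k)
        = dist (stagePt xi k) (stagePt xi (k + 1)) := by
      have : stageA xi v (k + 1) = stageB xi v k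
          + dist (stagePt xi k) (stagePt xi (k + 1)) / v := rfl
      rw [this]
      rw [add_sub_cancel_left]
      exact mul_div_cancel₀ _ hv.ne'
    rw [this, geod_dist]

lemma thePath_eq_piece {k : ℕ} {t : ℝ} (h1 : stageA xi v k ≤ t)
    (h2 : t ≤ stageA xi v (k + 1)) :
    thePath hM xi v t = pathPiece hM xi v k t := by
  rcases lt_or_eq_of_le h2 with h2 | h2
  · unfold thePath; rw [stageIdx_eq xi hv h1 h2]
  · subst h2
    unfold thePath
    rw [stageIdx_eq xi hv (le_refl (stageA xi v (k + 1))) (stageA_lt_succ xi hv (k + 1)),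
      pathPiece_endpoint hM xi hv]
    unfold pathPiece
    rw [if_pos (le_of_lt (stageA_lt_stageB xi hv (k + 1)))]

lemma pathPiece_lip {k : ℕ} {s t : ℝ} (hs : stageA xi v k ≤ s) (hst : s ≤ t)
    (ht : t ≤ stageA xi v (k + 1)) :
    dist (pathPiece hM xi v k s) (pathPiece hM xi v k t) ≤ v * (t - s) := by
  have hvts : 0 ≤ v * (t - s) := mul_nonneg hv.le (by linarith)
  have key : ∀ u : ℝ, stageB xi v k < u → u ≤ stageA xi v (k + 1) →
      v * (u - stageB xi v k) ∈ Set.Icc (0 : ℝ) (dist (stagePt xi k) (stagePt xi (k + 1))) := by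
    intro u h1 h2
    constructor
    · exact mul_nonneg hv.le (by linarith)
    · have : u - stageB xi v k ≤ dist (stagePt xi k) (stagePt xi (k + 1)) / v := by
        have : stageA xi v (k + 1) = stageB xi v k
            + dist (stagePt xi k) (stagePt xi (k + 1)) / v := rfl
        linarith
      calc v * (u - stageB xi v k) ≤ v * (dist (stagePt xi k) (stagePt xi (k + 1)) / v) :=
            by exact mul_le_mul_of_nonneg_left this hv.le
        _ = dist (stagePt xi k) (stagePt xi (k + 1)) := mul_div_cancel₀ _ hv.ne'
  unfold pathPiece
  rcases le_or_gt t (stageB xi v k) with h1 | h1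
  · rw [if_pos (le_trans hst h1), if_pos h1]
    simpa using hvts
  · rw [if_neg (not_le.2 h1)]
    rcases le_or_gt s (stageB xi v k) with h2 | h2
    · rw [if_pos h2]
      have h0 : (0 : ℝ) ∈ Set.Icc (0 : ℝ) (dist (stagePt xi k) (stagePt xi (k + 1))) :=
        ⟨le_refl _, dist_nonneg⟩
      have := geod_iso hM (stagePt xi k) (stagePt xi (k + 1)) h0 (key t h1 ht)
      rw [geod_zero] at this
      rw [this]
      rw [abs_of_nonpos (by nlinarith)]
      nlinarith
    · rw [if_neg (not_le.2 h2)]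
      rw [geod_iso hM _ _ (key s h2 (le_trans hst ht)) (key t h1 ht)]
      rw [abs_of_nonpos (by nlinarith)]
      nlinarith

lemma thePath_lip_aux (n : ℕ) : ∀ s t : ℝ, 0 ≤ s → s ≤ t → t ≤ stageA xi v n →
    dist (thePath hM xi v s) (thePath hM xi v t) ≤ v * (t - s) := by
  induction n with
  | zero =>
    intro s t hs hst ht
    have : stageA xi v 0 = 0 := rfl
    have hst' : s = t := le_antisymm hst (by rw [this] at ht; linarith)
    subst hst'
    simp [mul_nonneg hv.le]
  | succ n ih =>
    intro s t hs hst ht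
    rcases le_or_gt t (stageA xi v n) with h | h
    · exact ih s t hs hst h
    · rcases le_or_gt (stageA xi v n) s with h2 | h2
      · rw [thePath_eq_piece hM xi hv h2 (le_trans hst ht),
          thePath_eq_piece hM xi hv (le_trans h2 hst) ht]
        exact pathPiece_lip hM xi hv h2 hst ht
      · have han : (0 : ℝ) ≤ stageA xi v n := stageA_nonneg xi hv n
        have d1 : dist (thePath hM xi v s) (thePath hM xi v (stageA xi v n))
            ≤ v * (stageA xi v n - s) := ih s _ hs h2.le (le_refl _)
        have d2 : dist (thePath hM xi v (stageA xi v n)) (thePath hM xi v t)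
            ≤ v * (t - stageA xi v n) := by
          rw [thePath_eq_piece hM xi hv (le_refl _) (le_of_lt (stageA_lt_succ xi hv n)),
            thePath_eq_piece hM xi hv h.le ht]
          exact pathPiece_lip hM xi hv (le_refl _) h.le ht
        calc dist (thePath hM xi v s) (thePath hM xi v t)
            ≤ dist (thePath hM xi v s) (thePath hM xi v (stageA xi v n))
              + dist (thePath hM xi v (stageA xi v n)) (thePath hM xi v t) := dist_triangle _ _ _
          _ ≤ v * (stageA xi v n - s) + v * (t - stageA xi v n) := add_le_add d1 d2
          _ = v * (t - s) := by ring

lemma thePath_const {k : ℕ} {t : ℝ} (h1 : stageA xi v k ≤ t) (h2 : t ≤ stageB xi v k) :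
    thePath hM xi v t = stagePt xi k := by
  rw [thePath_eq_piece hM xi hv h1 (le_trans h2 (stageB_le_stageA_succ xi hv k))]
  unfold pathPiece
  rw [if_pos h2]

end Aux

/-- In a nonempty compact geodesic metric space, for every `v > 0` and every sequence of points
`(x_i)`, there is a path of speed at most `v` satisfying property (B) for every `x_i`. -/
theorem statement_2 {M : Type*} [MetricSpace M] [CompactSpace M] [Nonempty M]
    (hM : IsGeodesicSpace M) (v : ℝ) (hv : 0 < v) (xi : ℕ → M) :
    ∃ x : ℝ → M,
      (∀ s t : ℝ, 0 ≤ s → 0 ≤ t → dist (x s) (x t) ≤ v * |s - t|) ∧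
      ∀ i, PropertyB x (xi i) := by
  refine ⟨thePath hM xi v, ?_, ?_⟩
  · -- Lipschitz
    have main : ∀ s t : ℝ, 0 ≤ s → s ≤ t → dist (thePath hM xi v s) (thePath hM xi v t)
        ≤ v * (t - s) := by
      intro s t hs hst
      obtain ⟨n, hn⟩ := exists_nat_gt t
      exact thePath_lip_aux hM xi hv n s t hs hst (le_trans hn.le (le_stageA xi hv n))
    intro s t hs ht
    rcases le_total s t with h | h
    · rw [abs_of_nonpos (by linarith), neg_sub]
      exact main s t hs h
    · rw [abs_of_nonneg (by linarith), dist_comm]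
      exact main t s ht h
  · -- Property B
    intro i K hK T hT
    obtain ⟨m, hm⟩ := exists_nat_gt (max T (1 / (1 - K)))
    have hm1 : T < (m : ℝ) := lt_of_le_of_lt (le_max_left _ _) hm
    have hm2 : 1 / (1 - K) < (m : ℝ) := lt_of_le_of_lt (le_max_right _ _) hm
    have hK1 : (0 : ℝ) < 1 - K := by have := hK.2; linarith
    set k := Nat.pair i m with hk
    have hmk : (m : ℝ) ≤ (k : ℝ) := Nat.cast_le.2 (Nat.right_le_pair i m)
    have hak : (k : ℝ) ≤ stageA xi v k := le_stageA xi hv k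
    have hTa : T < stageA xi v k := lt_of_lt_of_le hm1 (le_trans hmk hak)
    have hab : stageA xi v k < stageB xi v k := stageA_lt_stageB xi hv k
    have ha0 : (0 : ℝ) < stageA xi v k := lt_trans hT hTa
    have hb0 : (0 : ℝ) < stageB xi v k := lt_trans ha0 hab
    refine ⟨stageA xi v k, stageB xi v k, hTa, hab, ?_, ?_⟩
    · -- fraction
      rw [lt_div_iff₀ hb0]
      have hbk : stageB xi v k = ((k : ℝ) + 2) * stageA xi v k + 1 := rfl
      have h1K : 1 / (1 - K) < (k : ℝ) + 2 := by
        have : (m : ℝ) ≤ (k : ℝ) := hmk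
        linarith
      have h1 : 1 < (1 - K) * ((k : ℝ) + 2) := by
        rw [div_lt_iff₀ hK1] at h1K
        linarith
      -- goal: K * stageB < stageB - stageA, i.e., stageA < (1-K) * stageB
      nlinarith [hK.1, hK.2]
    · intro t ht
      have := thePath_const hM xi hv ht.1 ht.2
      rw [this]
      unfold stagePt
      rw [hk, Nat.unpair_pair]
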